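/- (Sin-algebra relations) For all integers s, k, n, j: E_{sk}·E_{nj} − E_{nj}·E_{sk} = 2√−1·sin(π·(kn − sj)/N)·E_{s+n, k+j}. Moreover, tr(E_{sk}·E_{nj}) = 0 unless s + n ≡ 0 (mod N) and k + j ≡ 0 (mod N), and tr(E_{sk}·E_{−s,−k}) = N for all integers s, k. -/

import Mathlib

open scoped BigOperators

/-- `ee w = exp(2πi w)`. -/
noncomputable def ee (w : ℂ) : ℂ := Complex.exp (2 * Real.pi * Complex.I * w)

/-- Integer powers of `Q = diag(e(1/N), …, e((N−1)/N), 1)`: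
`Q^m = diag(e(m·1/N), …, e(m·(N−1)/N), e(m·N/N))`. -/
noncomputable def Qpow (N : ℕ) (m : ℤ) : Matrix (Fin N) (Fin N) ℂ :=
  Matrix.diagonal fun i => ee ((m : ℂ) * (((i : ℕ) : ℂ) + 1) / N)

/-- Integer powers of the cyclic shift matrix `Λ`:
`(Λ^n)_{ij} = 1` iff `j ≡ i + n (mod N)`. -/
noncomputable def Lampow (N : ℕ) (n : ℤ) : Matrix (Fin N) (Fin N) ℂ :=
  Matrix.of fun i j => if (((i : ℕ) : ℤ) + n) % N = ((j : ℕ) : ℤ) % N then 1 else 0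

/-- The sin-algebra basis `E_{mn} = e(mn/(2N))·Q^m·Λ^n`. -/
noncomputable def Emat (N : ℕ) (m n : ℤ) : Matrix (Fin N) (Fin N) ℂ :=
  ee ((m : ℂ) * (n : ℂ) / (2 * N)) • (Qpow N m * Lampow N n)

lemma ee_add (a b : ℂ) : ee (a + b) = ee a * ee b := by
  simp [ee, mul_add, Complex.exp_add]
lemma ee_zero : ee 0 = 1 := by simp [ee]
lemma ee_int (n : ℤ) : ee n = 1 := by
  rw [ee, show 2 * (Real.pi:ℂ) * Complex.I * n = n * (2*Real.pi*Complex.I) by ring]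
  exact Complex.exp_int_mul_two_pi_mul_I n
lemma ee_pow (c : ℂ) (k : ℕ) : ee c ^ k = ee (k * c) := by
  rw [ee, ee, ← Complex.exp_nat_mul]; ring_nf

lemma ee_eq_of_dvd (N : ℕ) (hN : N ≠ 0) {a b : ℤ} (h : (N:ℤ) ∣ (a - b)) :
    ee ((a:ℂ)/N) = ee ((b:ℂ)/N) := by
  obtain ⟨c, hc⟩ := h
  have hN' : (N:ℂ) ≠ 0 := Nat.cast_ne_zero.mpr hN
  have ha : (a:ℂ) = b + N * c := by
    have : a = b + N * c := by omega
    rw [this]; push_cast; ring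
  rw [ha, show ((b:ℂ) + N*c)/N = b/N + c by field_simp, ee_add, ee_int, mul_one]

lemma ee_ne_one (N : ℕ) (hN : N ≠ 0) {m : ℤ} (h : ¬ (N:ℤ) ∣ m) :
    ee ((m:ℂ)/N) ≠ 1 := by
  intro he
  rw [ee, Complex.exp_eq_one_iff] at he
  obtain ⟨c, hc⟩ := he
  have hN' : (N:ℂ) ≠ 0 := Nat.cast_ne_zero.mpr hN
  have h2 : (2:ℂ) * Real.pi * Complex.I ≠ 0 := by
    simp [Real.pi_ne_zero, Complex.I_ne_zero]
  have hc' : (2:ℂ) * Real.pi * Complex.I * ((m:ℂ)) = 2 * Real.pi * Complex.I * (c * N) := by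
    field_simp at hc; linear_combination (2 * (Real.pi:ℂ) * Complex.I) * hc
  have h3 : (m:ℂ) = c * N := mul_left_cancel₀ h2 hc'
  have h4 : m = c * N := by exact_mod_cast h3
  exact h ⟨c, by linarith [h4]⟩

lemma Qpow_mul (N : ℕ) (m s : ℤ) : Qpow N m * Qpow N s = Qpow N (m + s) := by
  ext i j
  rw [Qpow, Qpow, Qpow, Matrix.diagonal_mul_diagonal, Matrix.diagonal_apply,
    Matrix.diagonal_apply]
  by_cases h : i = j
  · rw [if_pos h, if_pos h, ← ee_add]; congr 1; push_cast; ring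
  · rw [if_neg h, if_neg h]

lemma Lam_mul_Q (N : ℕ) (hN : N ≠ 0) (n s : ℤ) :
    Lampow N n * Qpow N s = ee ((s:ℂ) * n / N) • (Qpow N s * Lampow N n) := by
  ext i j
  rw [Matrix.smul_apply, Qpow, Lampow, Matrix.mul_diagonal, Matrix.diagonal_mul, smul_eq_mul]
  by_cases h : (((i:ℕ):ℤ) + n) % N = ((j:ℕ):ℤ) % N
  · simp only [Matrix.of_apply, if_pos h, one_mul, mul_one]
    have h1 : (N:ℤ) ∣ (((j:ℕ):ℤ) - (((i:ℕ):ℤ) + n)) := Int.ModEq.dvd h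
    obtain ⟨c, hc⟩ := h1
    have hd : (N:ℤ) ∣ (s * (((j:ℕ):ℤ) + 1) - (s * n + s * (((i:ℕ):ℤ) + 1))) :=
      ⟨s * c, by linear_combination s * hc⟩
    have key := ee_eq_of_dvd N hN hd
    push_cast at key
    rw [show (s:ℂ) * (((j:ℕ):ℂ) + 1) / N = ((s:ℂ) * ((j:ℕ)+1)) / N by ring] at *
    rw [key, ← ee_add]; congr 1; ring
  · simp only [Matrix.of_apply, if_neg h, zero_mul, mul_zero]

lemma Lampow_mul (N : ℕ) (hN : 0 < N) (n t : ℤ) :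
    Lampow N n * Lampow N t = Lampow N (n + t) := by
  ext i j
  simp only [Lampow, Matrix.mul_apply, Matrix.of_apply]
  have hNZ : (0:ℤ) < (N:ℤ) := by exact_mod_cast hN
  set K : Fin N := ⟨((((i:ℕ):ℤ) + n) % N).toNat, by
    have h1 := Int.emod_nonneg (((i:ℕ):ℤ) + n) hNZ.ne'
    have h2 := Int.emod_lt_of_pos (((i:ℕ):ℤ) + n) hNZ
    omega⟩ with hK
  have hKv : ((K:ℕ):ℤ) = (((i:ℕ):ℤ) + n) % N := by
    rw [hK]
    simp only [Fin.val_mk]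
    have h1 := Int.emod_nonneg (((i:ℕ):ℤ) + n) hNZ.ne'
    omega
  rw [Finset.sum_eq_single K]
  · have hc1 : ((((i:ℕ):ℤ) + n) % N = ((K:ℕ):ℤ) % N) := by
      rw [hKv, Int.emod_emod_of_dvd _ dvd_rfl]
    rw [if_pos hc1, one_mul]
    have hcond : (((K:ℕ):ℤ) + t) % N = (((i:ℕ):ℤ) + (n + t)) % N := by
      rw [hKv, Int.emod_add_emod, add_assoc]
    rw [hcond]
  · intro b _ hb
    have hx : ¬ ((((i:ℕ):ℤ) + n) % N = ((b:ℕ):ℤ) % N) := by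
      intro hc
      apply hb
      have hbv : ((b:ℕ):ℤ) % N = ((b:ℕ):ℤ) :=
        Int.emod_eq_of_lt (by positivity) (by exact_mod_cast b.isLt)
      apply Fin.ext
      have hbK : ((b:ℕ):ℤ) = ((K:ℕ):ℤ) := by rw [hKv, hc]; exact hbv.symm
      exact_mod_cast hbK
    rw [if_neg hx, zero_mul]
  · intro h; exact absurd (Finset.mem_univ K) h

lemma Emat_mul (N : ℕ) (hN : 0 < N) (s k n j : ℤ) :
    Emat N s k * Emat N n j
      = ee (((n * k - s * j : ℤ) : ℂ) / (2 * N)) • Emat N (s + n) (k + j) := by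
  have hN' : (N:ℂ) ≠ 0 := Nat.cast_ne_zero.mpr hN.ne'
  rw [Emat, Emat, Emat, smul_mul_assoc, mul_smul_comm, smul_smul]
  rw [show Qpow N s * Lampow N k * (Qpow N n * Lampow N j)
      = Qpow N s * (Lampow N k * Qpow N n) * Lampow N j by
    rw [mul_assoc, mul_assoc, mul_assoc]]
  rw [Lam_mul_Q N hN.ne' k n, mul_smul_comm, smul_mul_assoc, smul_smul]
  rw [show Qpow N s * (Qpow N n * Lampow N k) * Lampow N j
      = (Qpow N s * Qpow N n) * (Lampow N k * Lampow N j) by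
    rw [mul_assoc, mul_assoc, mul_assoc]]
  rw [Qpow_mul, Lampow_mul N hN, smul_smul]
  congr 1
  rw [← ee_add, ← ee_add, ← ee_add]
  congr 1
  push_cast
  field_simp
  ring

lemma sum_ee (N : ℕ) (hN : 0 < N) {m : ℤ} (hm : ¬ (N:ℤ) ∣ m) :
    ∑ i : Fin N, ee ((m:ℂ) * (((i:ℕ):ℂ) + 1) / N) = 0 := by
  have hN' : (N:ℂ) ≠ 0 := Nat.cast_ne_zero.mpr hN.ne'
  have hterm : ∀ i : Fin N,
      ee ((m:ℂ) * (((i:ℕ):ℂ) + 1) / N) = ee ((m:ℂ)/N) ^ ((i:ℕ) + 1) := by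
    intro i; rw [ee_pow]; congr 1; push_cast; ring
  simp_rw [hterm]
  rw [Fin.sum_univ_eq_sum_range (fun i => ee ((m:ℂ)/N) ^ (i + 1)) N]
  have hne : ee ((m:ℂ)/N) ≠ 1 := ee_ne_one N hN.ne' hm
  have hpowN : ee ((m:ℂ)/N) ^ N = 1 := by
    rw [ee_pow, show ((N:ℕ):ℂ) * ((m:ℂ)/N) = (m:ℂ) by field_simp, ee_int]
  calc ∑ i ∈ Finset.range N, ee ((m:ℂ)/N) ^ (i + 1)
      = (∑ i ∈ Finset.range N, ee ((m:ℂ)/N) ^ i) * ee ((m:ℂ)/N) := by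
        rw [Finset.sum_mul]; exact Finset.sum_congr rfl fun i _ => (pow_succ _ _)
    _ = 0 := by rw [geom_sum_eq hne, hpowN]; simp

lemma trace_QL (N : ℕ) (hN : 0 < N) (m n : ℤ) (h : ¬ ((N:ℤ) ∣ m ∧ (N:ℤ) ∣ n)) :
    Matrix.trace (Qpow N m * Lampow N n) = 0 := by
  have hNZ : (0:ℤ) < (N:ℤ) := by exact_mod_cast hN
  rw [Matrix.trace]
  by_cases hn : (N:ℤ) ∣ n
  · have hm : ¬ (N:ℤ) ∣ m := fun hm => h ⟨hm, hn⟩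
    have hdiag : ∀ i : Fin N, Matrix.diag (Qpow N m * Lampow N n) i
        = ee ((m:ℂ) * (((i:ℕ):ℂ) + 1) / N) := by
      intro i
      rw [Matrix.diag_apply, Qpow, Lampow, Matrix.diagonal_mul, Matrix.of_apply]
      have : (((i:ℕ):ℤ) + n) % N = ((i:ℕ):ℤ) % N := by
        obtain ⟨c, hc⟩ := hn; rw [hc, Int.add_mul_emod_self_left]
      rw [if_pos this, mul_one]
    simp_rw [hdiag]
    exact sum_ee N hN hm
  · have hdiag : ∀ i : Fin N, Matrix.diag (Qpow N m * Lampow N n) i = 0 := by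
      intro i
      rw [Matrix.diag_apply, Qpow, Lampow, Matrix.diagonal_mul, Matrix.of_apply]
      have : ¬ ((((i:ℕ):ℤ) + n) % N = ((i:ℕ):ℤ) % N) := by
        intro hc
        apply hn
        have := Int.ModEq.dvd hc
        simpa using (Int.dvd_neg.mpr (by simpa using this))
      rw [if_neg this, mul_zero]
    simp_rw [hdiag]
    simp

lemma Qpow_zero (N : ℕ) : Qpow N 0 = 1 := by
  rw [Qpow, show (fun i : Fin N => ee (((0:ℤ):ℂ) * (((i:ℕ):ℂ) + 1) / N)) = fun _ => 1 by
    funext i; push_cast; rw [zero_mul, zero_div, ee_zero], Matrix.diagonal_one]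

lemma Lampow_zero (N : ℕ) : Lampow N 0 = 1 := by
  ext i j
  rw [Lampow, Matrix.of_apply, Matrix.one_apply]
  have hi : (((i:ℕ):ℤ) + 0) % N = ((i:ℕ):ℤ) % N := by rw [add_zero]
  rw [hi]
  by_cases h : i = j
  · rw [if_pos h, if_pos (by rw [h])]
  · rw [if_neg h, if_neg (by
      intro hc
      apply h
      have h1 : ((i:ℕ):ℤ) % N = ((i:ℕ):ℤ) := Int.emod_eq_of_lt (by positivity) (by exact_mod_cast i.isLt)
      have h2 : ((j:ℕ):ℤ) % N = ((j:ℕ):ℤ) := Int.emod_eq_of_lt (by positivity) (by exact_mod_cast j.isLt)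
      apply Fin.ext
      have : ((i:ℕ):ℤ) = ((j:ℕ):ℤ) := by rw [← h1, hc, h2]
      exact_mod_cast this)]

lemma two_I_sin (N : ℕ) (hN : N ≠ 0) (x : ℤ) :
    ee ((x:ℂ)/(2*N)) - ee ((((-x:ℤ)):ℂ)/(2*N))
      = 2 * Complex.I * Complex.sin ((Real.pi:ℂ) * (x:ℂ) / N) := by
  have hN' : (N:ℂ) ≠ 0 := Nat.cast_ne_zero.mpr hN
  rw [Complex.sin, ee, ee]
  rw [show 2*(Real.pi:ℂ)*Complex.I*((x:ℂ)/(2*N)) = ((Real.pi:ℂ)*(x:ℂ)/N) * Complex.I by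
    field_simp]
  rw [show 2*(Real.pi:ℂ)*Complex.I*((((-x:ℤ)):ℂ)/(2*N)) = -(((Real.pi:ℂ)*(x:ℂ)/N) * Complex.I) by
    push_cast; field_simp]
  rw [show -((Real.pi:ℂ)*(x:ℂ)/N) * Complex.I = -(((Real.pi:ℂ)*(x:ℂ)/N) * Complex.I) by ring]
  ring_nf
  rw [Complex.I_sq]
  ring

theorem sin_algebra_relations (N : ℕ) (hN : 2 ≤ N) :
    (∀ s k n j : ℤ,
      Emat N s k * Emat N n j - Emat N n j * Emat N s k
        = (2 * Complex.I
            * Complex.sin ((Real.pi : ℂ) * ((k * n - s * j : ℤ) : ℂ) / N))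
          • Emat N (s + n) (k + j)) ∧
    (∀ s k n j : ℤ, ¬ ((N : ℤ) ∣ (s + n) ∧ (N : ℤ) ∣ (k + j)) →
      Matrix.trace (Emat N s k * Emat N n j) = 0) ∧
    (∀ s k : ℤ, Matrix.trace (Emat N s k * Emat N (-s) (-k)) = (N : ℂ)) := by
  have hN0 : 0 < N := by omega
  refine ⟨?_, ?_, ?_⟩
  · intro s k n j
    rw [Emat_mul N hN0 s k n j, Emat_mul N hN0 n j s k, add_comm n s, add_comm j k, ← sub_smul]
    congr 1
    have hx : (s * j - n * k : ℤ) = -(n * k - s * j) := by ring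
    rw [hx]
    have := two_I_sin N hN0.ne' (n * k - s * j)
    rw [show ((k * n - s * j : ℤ):ℂ) = ((n * k - s * j : ℤ):ℂ) by push_cast; ring]
    exact this
  · intro s k n j h
    rw [Emat_mul N hN0 s k n j, Matrix.trace_smul, Emat, Matrix.trace_smul,
      trace_QL N hN0 _ _ h]
    simp
  · intro s k
    rw [Emat_mul N hN0 s k (-s) (-k)]
    rw [show (s + -s : ℤ) = 0 by ring, show (k + -k : ℤ) = 0 by ring,
      show ((-s) * k - s * (-k) : ℤ) = 0 by ring]
    rw [Emat, Qpow_zero, Lampow_zero, one_mul]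
    push_cast
    rw [zero_div, ee_zero, zero_mul, zero_div, ee_zero, one_smul, one_smul,
      Matrix.trace_one]
    simp
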